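/- Let R be a commutative ring with unity in which every non-Jacobson element is contained in only finitely many maximal ideals. Let k ∈ ℕ and I_0,I_1,…,I_k be mutually co-maximal ideals of R; moreover, if exactly one of the I_j (0 ≤ j ≤ k) is a proper ideal, assume additionally that this proper ideal is contained in only finitely many maximal ideals. Let m^i_j ∈ ℕ for 0 ≤ i,j ≤ k. Then the row map SL_{k+1}(R) → ∏_{i=0}^{k} PF^{k,(m^i_0,…,m^i_k)}_{I_i} is surjective. -/

import Mathlib

/-- A vector `(a_0, …, a_k) ∈ R^{k+1}` is unital if `(a_0) + (a_1) + ⋯ + (a_k) = R`. -/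
def IsUnitalVector {R : Type*} [CommRing R] {n : ℕ} (v : Fin n → R) : Prop :=
  ∑ i, Ideal.span {v i} = ⊤

/-- The relation `∼^{k,(m_0,…,m_k)}_I` on unital vectors:
`(a_i) ∼ (b_i)` iff there is `λ ∈ R`, a unit modulo `I`, with `a_i ≡ λ^{m_i} b_i mod I`
for all `i`.  (When `I = ⊤` this relation is total, matching the convention that the
generalized projective space of the unit ideal is a single point.) -/
def ProjRel (R : Type*) [CommRing R] {n : ℕ} (m : Fin n → ℕ) (I : Ideal R)
    (a b : {v : Fin n → R // IsUnitalVector v}) : Prop :=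
  ∃ lam : R, IsUnit (Ideal.Quotient.mk I lam) ∧ ∀ i, a.1 i - lam ^ m i * b.1 i ∈ I

/-- The generalized projective space `PF^{k,(m_0,…,m_k)}_I`: the quotient of the set of
unital `(k+1)`-vectors by the relation `∼^{k,(m_0,…,m_k)}_I`. -/
def GenProjSpace (R : Type*) [CommRing R] {n : ℕ} (m : Fin n → ℕ) (I : Ideal R) :=
  Quot (ProjRel R m I)

/-!
The rows are matched exactly, with `λ = 1`. Put `J_i = ⋂_{l ≠ i} I_l`, so that `I_i + J_i = R`.
The hypotheses on `R` make every `I_i` lie in only finitely many maximal ideals, i.e. `R/I_i` is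
semilocal. A semilocal ring has stable rank one, so a unimodular row `a` can be brought to
`(u, a_1, …)` with `u` a unit by adding multiples of the other entries; with the Whitehead trick
for `u` this exhibits `a` as the `i`-th row of a product of elementary transvections over `R/I_i`.
As `J_i` maps onto `R/I_i`, these transvections lift to transvections of `R` with entries in
`J_i`, giving `B_i ∈ SL_{k+1}(R)` with `B_i ≡ 1 mod J_i` and `i`-th row `≡ a_i mod I_i`. Then
`B_0 B_1 ⋯ B_k ≡ B_i mod I_i` for every `i`.
-/

open Matrix

section Transvections

variable {ι : Type*} [Fintype ι] [DecidableEq ι] {R S : Type*} [CommRing R] [CommRing S]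

variable (ι) in
def transvectionClosure (J : Ideal R) : Submonoid (Matrix ι ι R) :=
  Submonoid.closure {M | ∃ a b c, a ≠ b ∧ c ∈ J ∧ transvection a b c = M}

theorem transvectionClosure_mono {J J' : Ideal R} (h : J ≤ J') :
    transvectionClosure ι J ≤ transvectionClosure ι J' :=
  Submonoid.closure_mono fun _ ⟨a, b, c, hab, hc, hM⟩ => ⟨a, b, c, hab, h hc, hM⟩

theorem det_eq_one_of_mem_transvectionClosure {J : Ideal R} {M : Matrix ι ι R}
    (hM : M ∈ transvectionClosure ι J) : M.det = 1 := by
  induction hM using Submonoid.closure_induction with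
  | mem _ h =>
    obtain ⟨a, b, c, hab, -, rfl⟩ := h
    exact det_transvection_of_ne a b hab c
  | one => exact det_one
  | mul _ _ _ _ hM hN => rw [det_mul, hM, hN, one_mul]

theorem RingHom.mapMatrix_transvection (f : R →+* S) (a b : ι) (c : R) :
    f.mapMatrix (transvection a b c) = transvection a b (f c) := by
  ext x y
  simp [transvection, one_apply, single_apply, apply_ite f]

theorem mapMatrix_mk_eq_one_of_mem_transvectionClosure {J : Ideal R} {M : Matrix ι ι R}
    (hM : M ∈ transvectionClosure ι J) : (Ideal.Quotient.mk J).mapMatrix M = 1 := by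
  induction hM using Submonoid.closure_induction with
  | mem _ h =>
    obtain ⟨a, b, c, -, hc, rfl⟩ := h
    rw [RingHom.mapMatrix_transvection, Ideal.Quotient.eq_zero_iff_mem.2 hc, transvection_zero]
  | one => exact map_one _
  | mul _ _ _ _ hM hN => rw [map_mul, hM, hN, one_mul]

theorem exists_mem_mk_eq_of_sup_eq_top {I J : Ideal R} (hIJ : I ⊔ J = ⊤) (x : R ⧸ I) :
    ∃ d ∈ J, Ideal.Quotient.mk I d = x :=
  ((Submodule.map_mkQ_eq_top I J).2 hIJ).ge (Submodule.mem_top (x := x))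

theorem exists_mem_transvectionClosure_mapMatrix_eq {I J : Ideal R} (hIJ : I ⊔ J = ⊤)
    {E : Matrix ι ι (R ⧸ I)} (hE : E ∈ transvectionClosure ι (⊤ : Ideal (R ⧸ I))) :
    ∃ B ∈ transvectionClosure ι J, (Ideal.Quotient.mk I).mapMatrix B = E := by
  induction hE using Submonoid.closure_induction with
  | mem _ h =>
    obtain ⟨a, b, c, hab, -, rfl⟩ := h
    obtain ⟨d, hdJ, rfl⟩ := exists_mem_mk_eq_of_sup_eq_top hIJ c
    exact ⟨transvection a b d, Submonoid.subset_closure ⟨a, b, d, hab, hdJ, rfl⟩,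
      RingHom.mapMatrix_transvection _ a b d⟩
  | one => exact ⟨1, one_mem _, map_one _⟩
  | mul _ _ _ _ hM hN =>
    obtain ⟨B, hB, rfl⟩ := hM
    obtain ⟨B', hB', rfl⟩ := hN
    exact ⟨B * B', mul_mem hB hB', map_mul _ B B'⟩

theorem mul_transvection_row (E : Matrix ι ι S) (i : ι) {a b : ι} (hab : a ≠ b) (c : S) :
    (E * transvection a b c) i = E i + Pi.single b (c * E i a) := by
  funext l
  by_cases hl : l = b
  · subst hl
    simp [mul_transvection_apply_same]
  · simp [mul_transvection_apply_of_ne _ _ _ _ hl, hl]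

end Transvections

section Semilocal

variable {S : Type*} [CommRing S]

theorem isUnit_of_forall_notMem_maximal {u : S} (h : ∀ M : Ideal S, M.IsMaximal → u ∉ M) :
    IsUnit u := by
  by_contra hu
  obtain ⟨M, hM, huM⟩ := exists_max_ideal_of_mem_nonunits hu
  exact h M hM huM

/-- Semilocal rings have stable rank one. -/
theorem exists_mem_isUnit_add_of_finite_maximal (hfin : {M : Ideal S | M.IsMaximal}.Finite)
    {a : S} {K : Ideal S} (h : Ideal.span {a} ⊔ K = ⊤) : ∃ k ∈ K, IsUnit (a + k) := by
  classical
  let Ms := {M : Ideal S | M.IsMaximal}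
  have : Fintype Ms := hfin.fintype
  have hcop : Pairwise fun M N : Ms => IsCoprime (M : Ideal S) N := fun M N hMN =>
    have : (M : Ideal S).IsMaximal := M.2
    have : (N : Ideal S).IsMaximal := N.2
    Ideal.isCoprime_of_isMaximal (Subtype.coe_injective.ne hMN)
  have hx : ∀ M : Ms, ∃ x ∈ K, a + x ∉ (M : Ideal S) := by
    intro ⟨M, hM⟩
    by_cases ha : a ∈ M
    · obtain ⟨x, hxK, hxM⟩ : ∃ x ∈ K, x ∉ M := SetLike.not_le_iff_exists.1 fun hKM =>
        hM.ne_top (top_le_iff.1 (h ▸ sup_le ((Ideal.span_singleton_le_iff_mem M).2 ha) hKM))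
      exact ⟨x, hxK, fun hax => hxM (by simpa using M.sub_mem hax ha)⟩
    · exact ⟨0, K.zero_mem, by simpa using ha⟩
  choose x hxK hxM using hx
  -- `e M ≡ 1` modulo `M` and `e M ≡ 0` modulo the other maximal ideals
  choose e he using fun M : Ms => Ideal.exists_forall_sub_mem_ideal hcop (Pi.single M 1)
  refine ⟨∑ M, e M * x M, K.sum_mem fun M _ => K.mul_mem_left _ (hxK M), ?_⟩
  refine isUnit_of_forall_notMem_maximal fun N hN hmem => ?_
  let N' : Ms := ⟨N, hN⟩
  have hsub : ∑ M, (e M - (Pi.single M 1 : Ms → S) N') * x M ∈ N :=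
    N.sum_mem fun M _ => N.mul_mem_right _ (he M N')
  simp only [sub_mul, Finset.sum_sub_distrib, Pi.single_apply, ite_mul, one_mul, zero_mul,
    Fintype.sum_ite_eq] at hsub
  exact hxM N' (by convert N.sub_mem hmem hsub using 1; ring)

end Semilocal

section ElementaryRows

variable {ι : Type*} [Fintype ι] [DecidableEq ι] {S : Type*} [CommRing S]

def IsElementaryRow (i : ι) (w : ι → S) : Prop :=
  ∃ E ∈ transvectionClosure ι (⊤ : Ideal S), E i = w

theorem isElementaryRow_single_one (i : ι) : IsElementaryRow i (Pi.single i (1 : S)) :=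
  ⟨1, one_mem _, by funext l; simp [one_apply, Pi.single_apply, eq_comm]⟩

namespace IsElementaryRow

variable {i : ι} {w : ι → S}

theorem add_single (h : IsElementaryRow i w) {a b : ι} (hab : a ≠ b) (c : S) :
    IsElementaryRow i (w + Pi.single b (c * w a)) := by
  obtain ⟨E, hE, rfl⟩ := h
  exact ⟨E * transvection a b c,
    mul_mem hE (Submonoid.subset_closure ⟨a, b, c, hab, Submodule.mem_top, rfl⟩),
    mul_transvection_row E i hab c⟩

/-- Transvections whose sources are never targets commute and leave all sources unchanged. -/
theorem add_sum_single (h : IsElementaryRow i w) {κ : Type*} (s : Finset κ) (src tgt : κ → ι)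
    (hst : ∀ j ∈ s, ∀ l ∈ s, src j ≠ tgt l) (c : κ → S) :
    IsElementaryRow i (w + ∑ j ∈ s, Pi.single (tgt j) (c j * w (src j))) := by
  classical
  induction s using Finset.induction_on with
  | empty => simpa using h
  | insert a s has ih =>
    have hs : ∀ j ∈ s, ∀ l ∈ s, src j ≠ tgt l := fun j hj l hl =>
      hst j (s.mem_insert_of_mem hj) l (s.mem_insert_of_mem hl)
    have hsrc : (w + ∑ j ∈ s, Pi.single (tgt j) (c j * w (src j)) : ι → S) (src a) =
        w (src a) := by
      simp only [Pi.add_apply, Finset.sum_apply, Pi.single_apply]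
      rw [Finset.sum_eq_zero fun j hj => if_neg (hst a (s.mem_insert_self a) j
        (s.mem_insert_of_mem hj)), add_zero]
    have := (ih hs).add_single (hst a (s.mem_insert_self a) a (s.mem_insert_self a)) (c a)
    rw [hsrc] at this
    rwa [Finset.sum_insert has, add_comm (Pi.single _ _), ← add_assoc]

end IsElementaryRow

theorem isElementaryRow_single_of_isUnit [Nontrivial ι] (i : ι) {u : S} (hu : IsUnit u) :
    IsElementaryRow i (Pi.single i u) := by
  obtain ⟨p, hp⟩ := exists_ne i
  obtain ⟨z, hz⟩ := hu.exists_left_inv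
  -- `(1, 0) ↦ (1, 1) ↦ (u, 1) ↦ (u, 0)` on the coordinates `(i, p)`
  have h := (((isElementaryRow_single_one i).add_single hp.symm 1).add_single hp (u - 1)).add_single
    hp.symm (-z)
  convert h using 1
  funext l
  by_cases hli : l = i
  · subst hli
    simp [hp.symm]
  · by_cases hlp : l = p
    · subst hlp
      simp [hli, hz]
    · simp [hli, hlp]

theorem isElementaryRow_of_isUnit_add_sum [Nontrivial ι] {i : ι} {v : ι → S} (t : ι → S)
    (hu : IsUnit (v i + ∑ j ∈ Finset.univ.erase i, t j * v j)) : IsElementaryRow i v := by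
  set u := v i + ∑ j ∈ Finset.univ.erase i, t j * v j
  obtain ⟨z, hz⟩ := hu.exists_left_inv
  have hne : ∀ j ∈ Finset.univ.erase i, j ≠ i := fun j hj => Finset.ne_of_mem_erase hj
  have hupdate : IsElementaryRow i (Function.update v i u) := by
    convert (isElementaryRow_single_of_isUnit i hu).add_sum_single (Finset.univ.erase i)
      (fun _ => i) id (fun j _ l hl => (hne l hl).symm) (fun j => z * v j) using 1
    funext l
    by_cases hli : l = i
    · subst hli
      simp [Finset.sum_apply, Pi.single_apply]
    · simp [Finset.sum_apply, Pi.single_apply, hli, mul_right_comm _ _ u, hz]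
  convert hupdate.add_sum_single (Finset.univ.erase i) id (fun _ => i) (fun j hj _ _ => hne j hj)
    (fun j => -t j) using 1
  funext l
  by_cases hli : l = i
  · rw [hli]
    have hsum : ∑ j ∈ Finset.univ.erase i, t j * Function.update v i u j
        = ∑ j ∈ Finset.univ.erase i, t j * v j :=
      Finset.sum_congr rfl fun j hj => by rw [Function.update_of_ne (hne j hj)]
    simp only [Pi.add_apply, Finset.sum_apply, Pi.single_eq_same, Function.update_self, id,
      neg_mul, Finset.sum_neg_distrib, hsum, u]
    ring
  · simp [Finset.sum_apply, hli]

theorem isElementaryRow_of_span_range_eq_top [Nontrivial ι]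
    (hfin : {M : Ideal S | M.IsMaximal}.Finite) (i : ι) {v : ι → S}
    (hv : Ideal.span (Set.range v) = ⊤) : IsElementaryRow i v := by
  have hK : Ideal.span {v i} ⊔ Ideal.span (v '' ↑(Finset.univ.erase i)) = ⊤ := by
    refine top_le_iff.1 (hv ▸ Ideal.span_le.2 ?_)
    rintro _ ⟨j, rfl⟩
    by_cases hj : j = i
    · exact Ideal.mem_sup_left (hj ▸ Ideal.mem_span_singleton_self _)
    · exact Ideal.mem_sup_right (Ideal.subset_span ⟨j, by simpa using hj, rfl⟩)
  obtain ⟨k, hkK, hk⟩ := exists_mem_isUnit_add_of_finite_maximal hfin hK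
  obtain ⟨t, rfl⟩ := (Submodule.mem_span_image_finset_iff_exists_fun' S).1 hkK
  exact isElementaryRow_of_isUnit_add_sum t hk

end ElementaryRows

section Completion

variable {R : Type*} [CommRing R]

theorem Ideal.finite_setOf_isMaximal_quotient {I : Ideal R}
    (hfin : {M : Ideal R | M.IsMaximal ∧ I ≤ M}.Finite) :
    {M : Ideal (R ⧸ I) | M.IsMaximal}.Finite :=
  (hfin.image (Ideal.map (Ideal.Quotient.mk I))).subset fun M hM =>
    ⟨M.comap (Ideal.Quotient.mk I),
      ⟨Ideal.comap_isMaximal_of_surjective _ Ideal.Quotient.mk_surjective (H := hM),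
        fun x hx => by simp [Ideal.Quotient.eq_zero_iff_mem.2 hx]⟩,
      Ideal.map_comap_of_surjective _ Ideal.Quotient.mk_surjective M⟩

theorem exists_mem_transvectionClosure_row_sub_mem {ι : Type*} [Fintype ι] [DecidableEq ι]
    [Nontrivial ι] {I J : Ideal R} (hIJ : I ⊔ J = ⊤)
    (hfin : {M : Ideal R | M.IsMaximal ∧ I ≤ M}.Finite) (i : ι) {v : ι → R}
    (hv : Ideal.span (Set.range v) = ⊤) :
    ∃ B ∈ transvectionClosure ι J, ∀ j, B i j - v j ∈ I := by
  have hvI : Ideal.span (Set.range (Ideal.Quotient.mk I ∘ v)) = ⊤ := by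
    rw [Set.range_comp, ← Ideal.map_span, hv, Ideal.map_top]
  obtain ⟨E, hE, hEi⟩ :=
    isElementaryRow_of_span_range_eq_top (Ideal.finite_setOf_isMaximal_quotient hfin) i hvI
  obtain ⟨B, hB, rfl⟩ := exists_mem_transvectionClosure_mapMatrix_eq hIJ hE
  exact ⟨B, hB, fun j => Ideal.Quotient.eq.1 (congrFun hEi j)⟩

end Completion

section Finiteness

variable {R : Type*} [CommRing R]

theorem finite_setOf_isMaximal_le_of_sup_eq_top
    (hnj : ∀ x : R, (∃ M : Ideal R, M.IsMaximal ∧ x ∉ M) →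
      {M : Ideal R | M.IsMaximal ∧ x ∈ M}.Finite) {I J : Ideal R} (hIJ : I ⊔ J = ⊤)
    (hJ : J ≠ ⊤) : {M : Ideal R | M.IsMaximal ∧ I ≤ M}.Finite := by
  obtain ⟨α, hα, β, hβ, hαβ⟩ :=
    Submodule.mem_sup.1 (hIJ ▸ Submodule.mem_top : (1 : R) ∈ I ⊔ J)
  obtain ⟨N, hN, hJN⟩ := Ideal.exists_le_maximal J hJ
  have hαN : α ∉ N := fun hαN =>
    hN.ne_top ((Ideal.eq_top_iff_one N).2 (hαβ ▸ N.add_mem hαN (hJN hβ)))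
  exact (hnj α ⟨N, hN, hαN⟩).subset fun M ⟨hM, hIM⟩ => ⟨hM, hIM hα⟩

theorem finite_setOf_isMaximal_le_of_pairwise_sup_eq_top
    (hnj : ∀ x : R, (∃ M : Ideal R, M.IsMaximal ∧ x ∉ M) →
      {M : Ideal R | M.IsMaximal ∧ x ∈ M}.Finite) {ι : Type*} (I : ι → Ideal R)
    (hcomax : ∀ i j, i ≠ j → I i ⊔ I j = ⊤)
    (hone : ∀ j, I j ≠ ⊤ → (∀ i, i ≠ j → I i = ⊤) →
      {M : Ideal R | M.IsMaximal ∧ I j ≤ M}.Finite) (i : ι) :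
    {M : Ideal R | M.IsMaximal ∧ I i ≤ M}.Finite := by
  by_cases hi : I i = ⊤
  · exact Set.finite_empty.subset fun M ⟨hM, hle⟩ => hM.ne_top (top_le_iff.1 (hi ▸ hle))
  by_cases hex : ∃ j, j ≠ i ∧ I j ≠ ⊤
  · obtain ⟨j, hji, hj⟩ := hex
    exact finite_setOf_isMaximal_le_of_sup_eq_top hnj (hcomax i j hji.symm) hj
  · push Not at hex
    exact hone i hi hex

end Finiteness

theorem isUnitalVector_iff_span_range_eq_top {R : Type*} [CommRing R] {n : ℕ} (v : Fin n → R) :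
    IsUnitalVector v ↔ Ideal.span (Set.range v) = ⊤ := by
  rw [IsUnitalVector, Ideal.sum_eq_sup, Finset.sup_univ_eq_iSup, ← Ideal.span_iUnion,
    Set.iUnion_singleton_eq_range]

theorem span_range_row_eq_top_of_det_eq_one {R ι : Type*} [CommRing R] [Fintype ι]
    [DecidableEq ι] {A : Matrix ι ι R} (hA : A.det = 1) (i : ι) :
    Ideal.span (Set.range (A i)) = ⊤ := by
  rw [Ideal.eq_top_iff_one, ← hA, det_eq_sum_mul_adjugate_row A i]
  exact Ideal.sum_mem _ fun j _ => Ideal.mul_mem_right _ _ (Ideal.subset_span ⟨j, rfl⟩)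

theorem map_prod_map_eq_of_map_eq_one {M N F α : Type*} [Monoid M] [Monoid N] [FunLike F M N]
    [MonoidHomClass F M N] [DecidableEq α] (f : F) {l : List α} (hl : l.Nodup) (B : α → M)
    {i : α} (hi : i ∈ l) (h : ∀ j, j ≠ i → f (B j) = 1) : f (l.map B).prod = f (B i) := by
  rw [map_list_prod, List.map_map, List.prod_map_eq_pow_single i (f ∘ B) fun j hj _ => h j hj,
    List.count_eq_one_of_mem hl hi, pow_one, Function.comp_apply]

theorem rowMap_surjective {R : Type*} [CommRing R]
    (hnj : ∀ x : R, (∃ M : Ideal R, M.IsMaximal ∧ x ∉ M) →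
      {M : Ideal R | M.IsMaximal ∧ x ∈ M}.Finite)
    (k : ℕ) (hk : 0 < k)
    (I : Fin (k + 1) → Ideal R)
    (hcomax : ∀ i j, i ≠ j → I i + I j = ⊤)
    (hone : ∀ j, I j ≠ ⊤ → (∀ i, i ≠ j → I i = ⊤) →
      {M : Ideal R | M.IsMaximal ∧ I j ≤ M}.Finite)
    (m : Fin (k + 1) → Fin (k + 1) → ℕ) :
    ∀ x : (i : Fin (k + 1)) → GenProjSpace R (m i) (I i),
      ∃ A : Matrix.SpecialLinearGroup (Fin (k + 1)) R,
        ∃ h : ∀ i, IsUnitalVector (fun j => A.1 i j),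
          ∀ i, Quot.mk (ProjRel R (m i) (I i)) ⟨fun j => A.1 i j, h i⟩ = x i := by
  intro x
  choose a ha using fun i => Quot.exists_rep (x i)
  have : Nontrivial (Fin (k + 1)) := Fin.nontrivial_iff_two_le.2 (by omega)
  let J i := ⨅ l ∈ Finset.univ.erase i, I l
  have hIJ : ∀ i, I i ⊔ J i = ⊤ := fun i =>
    Ideal.sup_iInf_eq_top fun l hl => hcomax i l (Finset.ne_of_mem_erase hl).symm
  choose B hBJ hBa using fun i => exists_mem_transvectionClosure_row_sub_mem (hIJ i)
    (finite_setOf_isMaximal_le_of_pairwise_sup_eq_top hnj I hcomax hone i) i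
    ((isUnitalVector_iff_span_range_eq_top _).1 (a i).2)
  let A := ((List.finRange (k + 1)).map B).prod
  have hAdet : A.det = 1 := det_eq_one_of_mem_transvectionClosure (J := ⊤) <|
    Submonoid.list_prod_mem _ fun _ hM => by
      obtain ⟨l, -, rfl⟩ := List.mem_map.1 hM
      exact transvectionClosure_mono le_top (hBJ l)
  -- modulo `I i`, every factor other than `B i` is the identity
  have hAa : ∀ i j, A i j - (a i).1 j ∈ I i := fun i j => by
    have hAB := map_prod_map_eq_of_map_eq_one (Ideal.Quotient.mk (I i)).mapMatrix
      (List.nodup_finRange _) B (List.mem_finRange i) fun l hl =>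
        mapMatrix_mk_eq_one_of_mem_transvectionClosure <|
          transvectionClosure_mono
            (biInf_le _ (Finset.mem_erase.2 ⟨hl.symm, Finset.mem_univ i⟩)) (hBJ l)
    simpa using (I i).add_mem (Ideal.Quotient.eq.1 (congrFun (congrFun hAB i) j)) (hBa i j)
  refine ⟨⟨A, hAdet⟩, fun i => (isUnitalVector_iff_span_range_eq_top _).2
    (span_range_row_eq_top_of_det_eq_one hAdet i), fun i => ?_⟩
  rw [← ha i]
  exact Quot.sound ⟨1, by simp, fun j => by simpa using hAa i j⟩
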